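/- Let $\bm L^0 \in \mathbb{R}^{p\times d_0}$ with $\frac{1}{p}\bm L^{0\top}\bm L^0$ having smallest eigenvalue bounded below by $c_L > 0$, let $\bm F^0 \in \mathbb{R}^{n\times d_0}$ with $\frac{1}{n}\bm F^{0\top}\bm F^0$ having smallest eigenvalue bounded below by $c_F > 0$, and let $\bm H \in \mathbb{R}^{d_0\times d}$ with $d < d_0$. Then $\frac{1}{np}\mathrm{Tr}\big[(\bm L^{0\top}\bm L^0 - \bm L^{0\top}\bm L^0\bm H(\bm H^\top\bm L^{0\top}\bm L^0\bm H)^{-1}\bm H^\top\bm L^{0\top}\bm L^0)\,\bm F^{0\top}\bm F^0\big] \ge c_F\, c_L\,(d_0 - d) > 0$, provided $\bm H^\top\bm L^{0\top}\bm L^0\bm H$ is invertible. -/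

import Mathlib

/-!
Write `LᵀL = S * S` with `S` symmetric. The residual `R` is then `S (1 - P) S`, where
`P = S H (Hᵀ S S H)⁻¹ Hᵀ S` is the orthogonal projection onto the column space of `S H`;
hence `R` is positive semidefinite and `tr P = d`. Since `tr (X Y) ≥ 0` for positive
semidefinite `X`, `Y`, the eigenvalue bounds give `tr (R FᵀF) ≥ n c_F tr R` and
`tr R = tr (LᵀL (1 - P)) ≥ p c_L tr (1 - P) = p c_L (d₀ - d)`.
-/

open Matrix

namespace Matrix

section Trace

variable {ι : Type*} [Fintype ι] [DecidableEq ι]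

open scoped MatrixOrder ComplexOrder in
theorem PosSemidef.exists_isHermitian_mul_self_eq {𝕜 : Type*} [RCLike 𝕜] {A : Matrix ι ι 𝕜}
    (hA : A.PosSemidef) : ∃ S : Matrix ι ι 𝕜, S.IsHermitian ∧ S * S = A :=
  ⟨CFC.sqrt A, (nonneg_iff_posSemidef.mp (CFC.sqrt_nonneg A)).1,
    CFC.sqrt_mul_sqrt_self A (nonneg_iff_posSemidef.mpr hA)⟩

open scoped ComplexOrder in
theorem PosSemidef.trace_mul_nonneg {𝕜 : Type*} [RCLike 𝕜] {A B : Matrix ι ι 𝕜}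
    (hA : A.PosSemidef) (hB : B.PosSemidef) : 0 ≤ (A * B).trace := by
  obtain ⟨S, hS, rfl⟩ := hA.exists_isHermitian_mul_self_eq
  calc (0 : 𝕜) ≤ (S * B * Sᴴ).trace := (hB.mul_mul_conjTranspose_same S).trace_nonneg
    _ = (S * S * B).trace := by rw [hS.eq, trace_mul_cycle]

theorem PosSemidef.mul_trace_le_trace_mul {A E : Matrix ι ι ℝ} {c : ℝ}
    (hA : (A - c • 1).PosSemidef) (hE : E.PosSemidef) : c * E.trace ≤ (A * E).trace := by
  have := hA.trace_mul_nonneg hE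
  rw [sub_mul, trace_sub, smul_mul, one_mul, trace_smul, smul_eq_mul] at this
  linarith

omit [Fintype ι] in
theorem PosSemidef.sub_mul_smul_one_of_inv_smul {A : Matrix ι ι ℝ} {s c : ℝ} (hs : 0 < s)
    (h : ((1 / s) • A - c • 1).PosSemidef) : (A - (s * c) • 1).PosSemidef := by
  convert h.smul hs.le using 1
  rw [smul_sub, smul_smul, smul_smul, mul_one_div_cancel hs.ne', one_smul]

omit [DecidableEq ι] in
open scoped MatrixOrder ComplexOrder in
theorem posSemidef_of_isStarProjection {𝕜 : Type*} [RCLike 𝕜] {P : Matrix ι ι 𝕜}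
    (hP : IsStarProjection P) : P.PosSemidef :=
  nonneg_iff_posSemidef.mp hP.nonneg

end Trace

section Projection

variable {ι κ : Type*} [Fintype ι] [Fintype κ] [DecidableEq κ]

noncomputable def colSpaceProj (K : Matrix ι κ ℝ) : Matrix ι ι ℝ := K * (Kᵀ * K)⁻¹ * Kᵀ

variable {K : Matrix ι κ ℝ}

theorem isStarProjection_colSpaceProj (hK : IsUnit (Kᵀ * K)) :
    IsStarProjection (colSpaceProj K) := by
  have hdet := (isUnit_iff_isUnit_det _).mp hK
  refine ⟨?_, ?_⟩
  · show K * (Kᵀ * K)⁻¹ * Kᵀ * (K * (Kᵀ * K)⁻¹ * Kᵀ) = K * (Kᵀ * K)⁻¹ * Kᵀ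
    simp only [Matrix.mul_assoc]
    rw [← Matrix.mul_assoc Kᵀ K, nonsing_inv_mul_cancel_left _ _ hdet]
  · show (K * (Kᵀ * K)⁻¹ * Kᵀ)ᴴ = K * (Kᵀ * K)⁻¹ * Kᵀ
    rw [conjTranspose_eq_transpose_of_trivial]
    simp [transpose_mul, transpose_nonsing_inv, Matrix.mul_assoc]

theorem trace_colSpaceProj (hK : IsUnit (Kᵀ * K)) :
    (colSpaceProj K).trace = Fintype.card κ := by
  rw [colSpaceProj, Matrix.mul_assoc, trace_mul_comm, Matrix.mul_assoc,
    nonsing_inv_mul _ ((isUnit_iff_isUnit_det _).mp hK), trace_one]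

end Projection

section SchurResidual

variable {ι κ : Type*} [Fintype ι] [DecidableEq ι] [Fintype κ] [DecidableEq κ]

noncomputable def schurResidual (A : Matrix ι ι ℝ) (H : Matrix ι κ ℝ) : Matrix ι ι ℝ :=
  A - A * H * (Hᵀ * A * H)⁻¹ * Hᵀ * A

variable {S : Matrix ι ι ℝ} {H : Matrix ι κ ℝ}

omit [DecidableEq ι] [Fintype κ] [DecidableEq κ] in
theorem transpose_mul_mul_of_transpose_eq (hS : Sᵀ = S) :
    (S * H)ᵀ * (S * H) = Hᵀ * (S * S) * H := by
  rw [transpose_mul, hS]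
  simp only [Matrix.mul_assoc]

theorem schurResidual_mul_self (hS : Sᵀ = S) :
    schurResidual (S * S) H = S * (1 - colSpaceProj (S * H)) * S := by
  rw [schurResidual, colSpaceProj, transpose_mul_mul_of_transpose_eq hS, Matrix.mul_sub,
    Matrix.sub_mul, Matrix.mul_one, transpose_mul, hS]
  simp only [Matrix.mul_assoc]

theorem PosSemidef.exists_schurResidual_eq {A : Matrix ι ι ℝ} (hA : A.PosSemidef)
    (hM : IsUnit (Hᵀ * A * H)) :
    ∃ S P : Matrix ι ι ℝ, Sᵀ = S ∧ S * S = A ∧ IsStarProjection P ∧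
      P.trace = Fintype.card κ ∧ schurResidual A H = S * (1 - P) * S := by
  obtain ⟨S, hS, rfl⟩ := hA.exists_isHermitian_mul_self_eq
  have hSt : Sᵀ = S := by simpa [conjTranspose_eq_transpose_of_trivial] using hS.eq
  rw [← transpose_mul_mul_of_transpose_eq hSt] at hM
  exact ⟨S, _, hSt, rfl, isStarProjection_colSpaceProj hM, trace_colSpaceProj hM,
    schurResidual_mul_self hSt⟩

theorem PosSemidef.schurResidual {A : Matrix ι ι ℝ} (hA : A.PosSemidef)
    (hM : IsUnit (Hᵀ * A * H)) : (schurResidual A H).PosSemidef := by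
  obtain ⟨S, P, hSt, -, hP, -, hR⟩ := hA.exists_schurResidual_eq hM
  have := (posSemidef_of_isStarProjection hP.one_sub).mul_mul_conjTranspose_same S
  rwa [conjTranspose_eq_transpose_of_trivial, hSt, ← hR] at this

theorem mul_card_sub_card_le_trace_schurResidual {A : Matrix ι ι ℝ} {c : ℝ}
    (hA : A.PosSemidef) (hAc : (A - c • 1).PosSemidef) (hM : IsUnit (Hᵀ * A * H)) :
    c * (Fintype.card ι - Fintype.card κ) ≤ (schurResidual A H).trace := by
  obtain ⟨S, P, -, rfl, hP, htr, hR⟩ := hA.exists_schurResidual_eq hM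
  calc c * (Fintype.card ι - Fintype.card κ) = c * (1 - P).trace := by
        rw [trace_sub, trace_one, htr]
    _ ≤ (S * S * (1 - P)).trace :=
        hAc.mul_trace_le_trace_mul (posSemidef_of_isStarProjection hP.one_sub)
    _ = (schurResidual (S * S) H).trace := by rw [hR, trace_mul_cycle S (1 - P) S]

end SchurResidual

end Matrix

/-- Lemma A.4 lower bound: with `λ_min(LᵀL/p) ≥ c_L > 0`, `λ_min(FᵀF/n) ≥ c_F > 0`
and `H : d₀×d`, `d < d₀`, the normalized trace of the Schur-type residual times `FᵀF`
is at least `c_F c_L (d₀ − d) > 0`. -/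
theorem schur_residual_trace_lower_bound
    (n p d0 d : ℕ) (hn : 0 < n) (hp : 0 < p) (hd : d < d0)
    (L : Matrix (Fin p) (Fin d0) ℝ) (F : Matrix (Fin n) (Fin d0) ℝ)
    (H : Matrix (Fin d0) (Fin d) ℝ)
    (cL cF : ℝ) (hcL : 0 < cL) (hcF : 0 < cF)
    (hLeig : ((1 / (p : ℝ)) • (Lᵀ * L) - cL • (1 : Matrix (Fin d0) (Fin d0) ℝ)).PosSemidef)
    (hFeig : ((1 / (n : ℝ)) • (Fᵀ * F) - cF • (1 : Matrix (Fin d0) (Fin d0) ℝ)).PosSemidef)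
    (hInv : IsUnit (Hᵀ * (Lᵀ * L) * H)) :
    cF * cL * ((d0 : ℝ) - d) ≤
      (1 / ((n : ℝ) * p)) *
        Matrix.trace ((Lᵀ * L -
          (Lᵀ * L) * H * (Hᵀ * (Lᵀ * L) * H)⁻¹ * Hᵀ * (Lᵀ * L)) * (Fᵀ * F)) ∧
      0 < cF * cL * ((d0 : ℝ) - d) := by
  have hnR : (0 : ℝ) < n := by exact_mod_cast hn
  have hpR : (0 : ℝ) < p := by exact_mod_cast hp
  have hdR : (0 : ℝ) < d0 - d := sub_pos.mpr (by exact_mod_cast hd)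
  have hL : (Lᵀ * L).PosSemidef := by
    simpa only [conjTranspose_eq_transpose_of_trivial] using posSemidef_conjTranspose_mul_self L
  have hR := hL.schurResidual hInv
  have htrR := mul_card_sub_card_le_trace_schurResidual hL
    (hLeig.sub_mul_smul_one_of_inv_smul hpR) hInv
  have htrRF : n * cF * (schurResidual (Lᵀ * L) H).trace ≤
      (schurResidual (Lᵀ * L) H * (Fᵀ * F)).trace := by
    rw [trace_mul_comm]
    exact (hFeig.sub_mul_smul_one_of_inv_smul hnR).mul_trace_le_trace_mul hR
  rw [Fintype.card_fin, Fintype.card_fin] at htrR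
  refine ⟨?_, by positivity⟩
  rw [one_div_mul_eq_div, le_div_iff₀ (by positivity)]
  calc cF * cL * ((d0 : ℝ) - d) * (n * p) = n * cF * (p * cL * (d0 - d)) := by ring
    _ ≤ n * cF * (schurResidual (Lᵀ * L) H).trace := by gcongr
    _ ≤ (schurResidual (Lᵀ * L) H * (Fᵀ * F)).trace := htrRF
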